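/- Contraction for permutation diagrams: Let w ∈ S_n and let i < j with w_i < w_j be such that the cell □ = (i, w_j) is a SW corner of the diagram I_w. Let v ∈ S_{n−1} be the permutation order-isomorphic to the word w_1 ⋯ w_{i−1} w_{i+1} ⋯ w_{j−1} w_i w_{j+1} ⋯ w_n (the entry w_j deleted and w_i moved to position j, with values relabelled order-preservingly to {1,…,n−1}). Then I_w/□ = I_v, where I_w/□ is the board in [n−1]×[n−1] obtained from I_w by deleting row i and column w_j and relabelling the remaining rows and columns order-preservingly. -/

import Mathlib

open Finset

/-- The number of `m × n` matrices over the finite field `F` of rank `r`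
whose support is contained in the board `B`. -/
noncomputable def mcount (F : Type) [Field F] [Fintype F] {m n : ℕ}
    (B : Finset (Fin m × Fin n)) (r : ℕ) : ℕ :=
  Nat.card {M : Matrix (Fin m) (Fin n) F // M.rank = r ∧ ∀ i j, (i, j) ∉ B → M i j = 0}

/-- The `q`-factorial `[k]!_q = ∏_{i=1}^k (q^i - 1)/(q - 1)`. -/
def qFact (q : ℚ) (k : ℕ) : ℚ := ∏ i ∈ Finset.range k, (q ^ (i + 1) - 1) / (q - 1)

/-- The `q`-binomial coefficient. -/
def qBinom (q : ℚ) (k l : ℕ) : ℚ :=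
  if l ≤ k then qFact q k / (qFact q l * qFact q (k - l)) else 0

/-- The `q`-Pochhammer symbol `(a; q)_k = ∏_{i=0}^{k-1} (1 - a q^i)`. -/
def qPoch (a q : ℚ) (k : ℕ) : ℚ := ∏ i ∈ Finset.range k, (1 - a * q ^ i)

/-- The `q`-Krawtchouk polynomial
`K_r(i) = ∑_s (-1)^{r-s} q^{ns + C(r-s,2)} [m-s choose r-s]_q [m-i choose s]_q`,
summed over `0 ≤ s ≤ min(r, m-i)`. -/
def kraw (q : ℚ) (m n r i : ℕ) : ℚ :=
  ∑ s ∈ Finset.range (min r (m - i) + 1),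
    (-1 : ℚ) ^ (r - s) * q ^ (n * s + (r - s).choose 2) *
      qBinom q (m - s) (r - s) * qBinom q (m - i) s

/-- The reduced matrix count `M_r(B,q) = 𝔪_r(B,q)/(q-1)^r`. -/
noncomputable def Mred (F : Type) [Field F] [Fintype F] (q : ℕ) {m n : ℕ}
    (B : Finset (Fin m × Fin n)) (r : ℕ) : ℚ :=
  (mcount F B r : ℚ) / ((q : ℚ) - 1) ^ r

/-- The `q`-hit number
`H_k(B,q) = q^{C(k+1,2)+C(m,2)} ∑_{i=k}^m M_i(B,q) ([n-i]!_q/[n-m]!_q) [i choose k]_q (-1)^{i+k} q^{-ik}`. -/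
noncomputable def qHit (F : Type) [Field F] [Fintype F] (q : ℕ) {m n : ℕ}
    (B : Finset (Fin m × Fin n)) (k : ℕ) : ℚ :=
  (q : ℚ) ^ ((k + 1).choose 2 + m.choose 2) *
    ∑ i ∈ Finset.Icc k m,
      Mred F q B i * (qFact (q : ℚ) (n - i) / qFact (q : ℚ) (n - m)) *
        qBinom (q : ℚ) i k * (-1 : ℚ) ^ (i + k) * (q : ℚ) ^ (-(i * k : ℤ))

/-- The classical hit number `h_i(B)`: the number of injections `σ : [m] → [n]`
with exactly `i` of the cells `(a, σ a)` in `B`. -/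
noncomputable def hitNum {m n : ℕ} (B : Finset (Fin m × Fin n)) (i : ℕ) : ℕ :=
  Nat.card {σ : Fin m ↪ Fin n // (Finset.univ.filter fun a => (a, σ a) ∈ B).card = i}

/-- The diagram `I_w = {(i, w_j) : i < j, w_i < w_j}` of a permutation `w`. -/
def diagram {n : ℕ} (w : Equiv.Perm (Fin n)) : Finset (Fin n × Fin n) :=
  Finset.univ.filter fun p => ∃ j, p.1 < j ∧ w p.1 < w j ∧ p.2 = w j

/-- A board has the NE property if whenever `i < i'`, `j < j'` and
`(i,j), (i',j), (i',j') ∈ B`, then `(i,j') ∈ B`. -/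
def hasNE {m n : ℕ} (B : Finset (Fin m × Fin n)) : Prop :=
  ∀ i i' : Fin m, ∀ j j' : Fin n, i < i' → j < j' →
    (i, j) ∈ B → (i', j) ∈ B → (i', j') ∈ B → (i, j') ∈ B

/-- The placements of `r` non-attacking rooks on the board `B`. -/
def placements {m n : ℕ} (B : Finset (Fin m × Fin n)) (r : ℕ) :
    Finset (Finset (Fin m × Fin n)) :=
  B.powerset.filter fun c =>
    c.card = r ∧ ∀ p ∈ c, ∀ p' ∈ c, p ≠ p' → p.1 ≠ p'.1 ∧ p.2 ≠ p'.2

/-- The number of NE inversions of the rook placement `c` on the board `B`: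
cells of `B` not occupied by a rook, not directly north of a rook, and
not directly east of a rook. -/
def invNE {m n : ℕ} (B c : Finset (Fin m × Fin n)) : ℕ :=
  (B.filter fun p => p ∉ c ∧ (∀ p' ∈ c, ¬(p'.2 = p.2 ∧ p.1 < p'.1)) ∧
    (∀ p' ∈ c, ¬(p'.1 = p.1 ∧ p'.2 < p.2))).card

/-- The Garsia–Remmel `q`-rook number `R^NE_r(B, x) = ∑_c x^{inv^NE_B(c)}`. -/
noncomputable def RNE {m n : ℕ} (B : Finset (Fin m × Fin n)) (r : ℕ) (x : ℚ) : ℚ :=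
  ∑ c ∈ placements B r, x ^ invNE B c

/-- A SW corner of `B`: a cell `(i,j) ∈ B` such that no other cell `(i',j') ∈ B`
satisfies `i' ≥ i` and `j' ≤ j`. -/
def isSWCorner {m n : ℕ} (B : Finset (Fin m × Fin n)) (p : Fin m × Fin n) : Prop :=
  p ∈ B ∧ ∀ p' ∈ B, p' ≠ p → ¬(p.1 ≤ p'.1 ∧ p'.2 ≤ p.2)

/-- The order-preserving embedding `Fin (m-1) → Fin m` whose range avoids `a`. -/
def unContract {m : ℕ} (a : Fin m) (i : Fin (m - 1)) : Fin m :=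
  if h : (i : ℕ) < (a : ℕ) then ⟨i, lt_trans h a.isLt⟩
  else ⟨(i : ℕ) + 1, by have := i.isLt; omega⟩

/-- The contraction `B/□` of a board at the cell `□ = (a, b)`: delete the row and
column of `□` and relabel rows and columns order-preservingly. -/
def contractBoard {m n : ℕ} (B : Finset (Fin m × Fin n)) (a : Fin m) (b : Fin n) :
    Finset (Fin (m - 1) × Fin (n - 1)) :=
  Finset.univ.filter fun p => (unContract a p.1, unContract b p.2) ∈ B

/-- The extended board `B_k ⊆ [m+k] × [n]`, obtained from `B` by adjoining `k` full rows. -/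
def extBoard {m n : ℕ} (B : Finset (Fin m × Fin n)) (k : ℕ) :
    Finset (Fin (m + k) × Fin n) :=
  Finset.univ.filter fun p =>
    m ≤ (p.1 : ℕ) ∨ ∃ i : Fin m, (i : ℕ) = (p.1 : ℕ) ∧ (i, p.2) ∈ B

/-- The word `w_1 ⋯ w_{i-1} w_{i+1} ⋯ w_{j-1} w_i w_{j+1} ⋯ w_n` (the entry `w_j`
deleted and `w_i` moved to position `j`), indexed by `Fin (n-1)` via the
order-preserving relabelling of positions `[n] \ {i}`. -/
def wordU {n : ℕ} (w : Equiv.Perm (Fin n)) (i j : Fin n) (x : Fin (n - 1)) : Fin n :=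
  if unContract i x = j then w i else w (unContract i x)


lemma unContract_val {m : ℕ} (a : Fin m) (x : Fin (m-1)) :
    (unContract a x : ℕ) = if (x:ℕ) < (a:ℕ) then (x:ℕ) else (x:ℕ) + 1 := by
  unfold unContract; split <;> simp_all

lemma unContract_ne {m : ℕ} (a : Fin m) (x : Fin (m-1)) : unContract a x ≠ a := by
  intro h
  have := congrArg Fin.val h
  rw [unContract_val] at this
  split at this <;> omega

lemma unContract_strictMono {m : ℕ} (a : Fin m) : StrictMono (unContract a) := by
  intro x y h
  have hx := unContract_val a x
  have hy := unContract_val a y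
  have h' : (x:ℕ) < (y:ℕ) := h
  rw [Fin.lt_def]
  split at hx <;> split at hy <;> omega

lemma unContract_surj {m : ℕ} (a : Fin m) (t : Fin m) (ht : t ≠ a) :
    ∃ x, unContract a x = t := by
  have h1 : (t:ℕ) ≠ (a:ℕ) := fun h => ht (Fin.ext h)
  have h2 : (t:ℕ) < m := t.isLt
  have h3 : (a:ℕ) < m := a.isLt
  by_cases h : (t:ℕ) < (a:ℕ)
  · refine ⟨⟨(t:ℕ), by omega⟩, ?_⟩
    apply Fin.ext
    rw [unContract_val]
    simp only [Fin.val_mk]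
    split <;> omega
  · refine ⟨⟨(t:ℕ) - 1, by omega⟩, ?_⟩
    apply Fin.ext
    rw [unContract_val]
    simp only [Fin.val_mk]
    split <;> omega

lemma mem_diagram {n : ℕ} (w : Equiv.Perm (Fin n)) (p : Fin n × Fin n) :
    p ∈ diagram w ↔ ∃ c, p.1 < c ∧ w p.1 < w c ∧ p.2 = w c := by
  simp [diagram]

/-- **Contraction for permutation diagrams.** Let `w ∈ S_n` and `i < j` with
`w_i < w_j` be such that `□ = (i, w_j)` is a SW corner of `I_w`, and let
`v ∈ S_{n-1}` be the permutation order-isomorphic to the word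
`w_1 ⋯ w_{i-1} w_{i+1} ⋯ w_{j-1} w_i w_{j+1} ⋯ w_n`. Then `I_w/□ = I_v`. -/
theorem stmt19 (n : ℕ) (w : Equiv.Perm (Fin n)) (i j : Fin n)
    (hij : i < j) (hw : w i < w j) (hsw : isSWCorner (diagram w) (i, w j))
    (v : Equiv.Perm (Fin (n - 1)))
    (hv : ∀ x y : Fin (n - 1), v x ≤ v y ↔ wordU w i j x ≤ wordU w i j y) :
    contractBoard (diagram w) i (w j) = diagram v := by
  set u := wordU w i j with hu
  have hnij : i ≠ j := ne_of_lt hij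
  have hlt : ∀ x y : Fin (n-1), v x < v y ↔ u x < u y :=
    fun x y => lt_iff_lt_of_le_iff_le (hv y x)
  have huj : ∀ x, u x ≠ w j := by
    intro x
    rw [hu]
    unfold wordU
    split
    · exact fun h => hnij (w.injective h)
    · rename_i h
      exact fun h' => h (w.injective h')
  have hrange : Set.range u = {t | t ≠ w j} := by
    ext t
    simp only [Set.mem_range, Set.mem_setOf_eq]
    constructor
    · rintro ⟨x, rfl⟩; exact huj x
    · intro ht
      have hc : w.symm t ≠ j := fun h => ht (by rw [← h, Equiv.apply_symm_apply])
      by_cases hci : w.symm t = i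
      · obtain ⟨x, hx⟩ := unContract_surj i j (Ne.symm hnij)
        refine ⟨x, ?_⟩
        rw [hu]; unfold wordU
        rw [if_pos hx, ← hci, Equiv.apply_symm_apply]
      · obtain ⟨x, hx⟩ := unContract_surj i (w.symm t) hci
        refine ⟨x, ?_⟩
        rw [hu]; unfold wordU
        rw [if_neg (by rw [hx]; exact hc), hx, Equiv.apply_symm_apply]
  -- key: unContract (w j) ∘ v = u
  have hBu : ∀ y, unContract (w j) (v y) = u y := by
    have hf : StrictMono (fun z => u (v.symm z)) := by
      intro z z' hz
      rw [← hlt]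
      simpa using hz
    have hg : StrictMono (unContract (w j)) := unContract_strictMono _
    have hr : Set.range (fun z => u (v.symm z)) = Set.range (unContract (w j)) := by
      have h1 : Set.range (fun z => u (v.symm z)) = Set.range u := by
        ext t
        constructor
        · rintro ⟨z, rfl⟩; exact ⟨v.symm z, rfl⟩
        · rintro ⟨x, rfl⟩; exact ⟨v x, by simp⟩
      have h2 : Set.range (unContract (w j)) = {t | t ≠ w j} := by
        ext t
        simp only [Set.mem_range, Set.mem_setOf_eq]
        constructor
        · rintro ⟨z, rfl⟩; exact unContract_ne _ _
        · exact unContract_surj _ _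
      rw [h1, hrange, h2]
    haveI : WellFoundedLT (Fin (n-1)) := inferInstance
    have heq := (StrictMono.range_inj hf hg).1 hr
    intro y
    have := congrFun heq (v y)
    simpa using this.symm
  -- the source of u y : the position in Fin n whose w-value is u y
  have hsrc : ∀ y : Fin (n-1), u y = w (if unContract i y = j then i else unContract i y) := by
    intro y
    rw [hu]; unfold wordU
    split <;> simp_all
  -- core combinatorial claim
  have core : ∀ x y : Fin (n-1),
      ((unContract i x, u y) ∈ diagram w ↔ (x < y ∧ u x < u y)) := by
    intro x y
    have hmem : (unContract i x, u y) ∈ diagram w ↔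
        (unContract i x < (if unContract i y = j then i else unContract i y) ∧
         w (unContract i x) < w (if unContract i y = j then i else unContract i y)) := by
      rw [mem_diagram]
      dsimp only
      constructor
      · rintro ⟨c, h1, h2, h3⟩
        have hc : (if unContract i y = j then i else unContract i y) = c :=
          w.injective ((hsrc y).symm.trans h3)
        rw [hc]; exact ⟨h1, h2⟩
      · rintro ⟨h1, h2⟩
        exact ⟨_, h1, h2, hsrc y⟩
    rw [hmem, hsrc x, hsrc y,
      show (x < y) = (unContract i x < unContract i y) from
        propext (unContract_strictMono i).lt_iff_lt.symm]
    by_cases hx : unContract i x = j <;> by_cases hy : unContract i y = j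
    · -- both map to j
      rw [if_pos hx, if_pos hy, hx, hy]
      constructor
      · rintro ⟨h1, -⟩
        exact absurd (h1.trans hij) (lt_irrefl _)
      · rintro ⟨h1, -⟩
        exact absurd h1 (lt_irrefl _)
    · -- x maps to j, y doesn't
      rw [if_pos hx, if_neg hy, hx]
      constructor
      · rintro ⟨h1, h2⟩
        exact ⟨h1, hw.trans h2⟩
      · rintro ⟨h1, h2⟩
        refine ⟨h1, ?_⟩
        rcases lt_or_gt_of_ne (fun h : w j = w (unContract i y) => hy (w.injective h).symm)
          with h | h
        · exact h
        · exfalso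
          have hmem2 : ((i : Fin n), w (unContract i y)) ∈ diagram w := by
            rw [mem_diagram]
            exact ⟨unContract i y, hij.trans h1, h2, rfl⟩
          have hne : ((i : Fin n), w (unContract i y)) ≠ ((i : Fin n), w j) := by
            intro hcontra
            exact hy (w.injective (congrArg Prod.snd hcontra))
          exact hsw.2 _ hmem2 hne ⟨le_refl _, le_of_lt h⟩
    · -- y maps to j, x doesn't
      rw [if_neg hx, if_pos hy, hy]
      constructor
      · rintro ⟨h1, h2⟩
        exact ⟨h1.trans hij, h2⟩
      · rintro ⟨h1, h2⟩
        refine ⟨?_, h2⟩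
        rcases lt_or_gt_of_ne (unContract_ne i x) with h | h
        · exact h
        · exfalso
          have hmem2 : (unContract i x, w j) ∈ diagram w := by
            rw [mem_diagram]
            exact ⟨j, h1, h2.trans hw, rfl⟩
          have hne : (unContract i x, w j) ≠ ((i : Fin n), w j) := by
            intro hcontra
            exact absurd (congrArg Prod.fst hcontra) (ne_of_gt h)
          exact hsw.2 _ hmem2 hne ⟨le_of_lt h, le_refl _⟩
    · rw [if_neg hx, if_neg hy]
  -- conclude
  ext ⟨x, y⟩
  simp only [contractBoard, Finset.mem_filter, Finset.mem_univ, true_and]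
  have hByu : unContract (w j) y = u (v.symm y) := by
    have := hBu (v.symm y)
    rwa [v.apply_symm_apply] at this
  rw [hByu, core x (v.symm y), mem_diagram]
  dsimp only
  constructor
  · rintro ⟨h1, h2⟩
    exact ⟨v.symm y, h1, (hlt _ _).mpr h2, (v.apply_symm_apply y).symm⟩
  · rintro ⟨c, h1, h2, h3⟩
    have hc : v.symm y = c := by rw [h3, v.symm_apply_apply]
    rw [hc]
    exact ⟨h1, (hlt _ _).mp h2⟩
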